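/- arXiv:1409.5476 — 5 statements merged into one kernel-verified Lean document; each statement's English description precedes it below -/
import Mathlib

section
/- Let n ≥ 4 and α ∈ [0,1]. For every integer h with 0 ≤ h ≤ n−1, there exists a connected simple graph G on n vertices such that H_α(G) ≥ min( α·((n−1)(n−2)/2 − h), (1−α)·h ). Consequently, the maximum of H_α over all connected simple graphs on n vertices is at least min( α·((n−1)(n−2)/2 − h), (1−α)·h ) for every such h. -/
open SimpleGraph

/-- Number of triangles (3-cliques) of a graph on `Fin n`. -/
noncomputable def triCount {n : ℕ} (G : SimpleGraph (Fin n)) : ℕ :=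
  (G.cliqueSet 3).ncard

/-- Number of edges of a graph on `Fin n`. -/
noncomputable def edgeCount {n : ℕ} (G : SimpleGraph (Fin n)) : ℕ :=
  G.edgeSet.ncard

/-- Number of non-adjacent unordered pairs of vertices. -/
noncomputable def nonEdgeCount {n : ℕ} (G : SimpleGraph (Fin n)) : ℝ :=
  (n : ℝ) * ((n : ℝ) - 1) / 2 - (edgeCount G : ℝ)

/-- The max–min objective `H_α(G) = min(α·N(G), (1−α)·T(G))`. -/
noncomputable def Hobj {n : ℕ} (α : ℝ) (G : SimpleGraph (Fin n)) : ℝ :=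
  min (α * nonEdgeCount G) ((1 - α) * (triCount G : ℝ))

theorem stmt2 {n : ℕ} (hn : 4 ≤ n) (α : ℝ) (hα0 : 0 ≤ α) (hα1 : α ≤ 1)
    (h : ℕ) (hh : h ≤ n - 1) :
    ∃ G : SimpleGraph (Fin n), G.Connected ∧
      min (α * ((((n : ℝ) - 1) * ((n : ℝ) - 2)) / 2 - (h : ℝ))) ((1 - α) * (h : ℝ))
        ≤ Hobj α G := by
  have hn0 : 0 < n := by omega
  set vtx : ℕ → Fin n := fun k => ⟨k % n, Nat.mod_lt _ hn0⟩ with hvtx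
  have vval : ∀ k, k < n → (vtx k).val = k := fun k hk => Nat.mod_eq_of_lt hk
  have vne : ∀ a b, a < n → b < n → a ≠ b → vtx a ≠ vtx b := by
    intro a b ha hb hab e
    apply hab
    have := congrArg Fin.val e
    rwa [vval a ha, vval b hb] at this
  set Estar : Finset (Sym2 (Fin n)) :=
    (Finset.univ.erase (vtx 0)).image (fun i => s(vtx 0, i)) with hEstar
  set g : ℕ → Sym2 (Fin n) :=
    fun j => if j + 2 < n then s(vtx 1, vtx (j+2)) else s(vtx 2, vtx 3) with hg
  set Eex : Finset (Sym2 (Fin n)) := (Finset.range h).image g with hEex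
  set S : Finset (Sym2 (Fin n)) := Estar ∪ Eex with hS
  set G := SimpleGraph.fromEdgeSet (↑S : Set (Sym2 (Fin n))) with hG
  -- adjacency of center to anything
  have hadj0 : ∀ v : Fin n, v ≠ vtx 0 → G.Adj (vtx 0) v := by
    intro v hv
    rw [hG, SimpleGraph.fromEdgeSet_adj]
    refine ⟨?_, fun e => hv e.symm⟩
    rw [Finset.mem_coe, hS, Finset.mem_union]
    left
    rw [hEstar, Finset.mem_image]
    exact ⟨v, Finset.mem_erase.2 ⟨hv, Finset.mem_univ v⟩, rfl⟩
  have hadj1 : ∀ j, j < h → j + 2 < n → G.Adj (vtx 1) (vtx (j+2)) := by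
    intro j hj hjn
    rw [hG, SimpleGraph.fromEdgeSet_adj]
    refine ⟨?_, vne 1 (j+2) (by omega) hjn (by omega)⟩
    rw [Finset.mem_coe, hS, Finset.mem_union]
    right
    rw [hEex, Finset.mem_image]
    exact ⟨j, Finset.mem_range.2 hj, by rw [hg]; simp [hjn]⟩
  have hadj23 : h = n - 1 → G.Adj (vtx 2) (vtx 3) := by
    intro hh1
    rw [hG, SimpleGraph.fromEdgeSet_adj]
    refine ⟨?_, vne 2 3 (by omega) (by omega) (by omega)⟩
    rw [Finset.mem_coe, hS, Finset.mem_union]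
    right
    rw [hEex, Finset.mem_image]
    refine ⟨n - 2, Finset.mem_range.2 (by omega), ?_⟩
    rw [hg]
    have : ¬ (n - 2 + 2 < n) := by omega
    simp [this]
  -- connectedness
  have hconn : G.Connected := by
    rw [SimpleGraph.connected_iff]
    refine ⟨?_, ⟨vtx 0⟩⟩
    have key : ∀ w : Fin n, G.Reachable (vtx 0) w := by
      intro w
      by_cases hw : w = vtx 0
      · rw [hw]
      · exact (hadj0 w hw).reachable
    intro u v
    exact (key u).symm.trans (key v)
  -- edge count bound
  have hedge : edgeCount G ≤ (n - 1) + h := by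
    have hsub : G.edgeSet ⊆ ↑S := by
      rw [hG, SimpleGraph.edgeSet_fromEdgeSet]
      exact Set.diff_subset
    have h1 : edgeCount G ≤ (↑S : Set (Sym2 (Fin n))).ncard :=
      Set.ncard_le_ncard hsub (Set.toFinite _)
    rw [Set.ncard_coe_finset] at h1
    refine h1.trans ?_
    refine (Finset.card_union_le _ _).trans ?_
    have h2 : Estar.card ≤ n - 1 := by
      refine (Finset.card_image_le).trans ?_
      rw [Finset.card_erase_of_mem (Finset.mem_univ _), Finset.card_univ, Fintype.card_fin]
    have h3 : Eex.card ≤ h := by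
      refine (Finset.card_image_le).trans ?_
      rw [Finset.card_range]
    omega
  -- triangle count bound
  set tri : ℕ → Finset (Fin n) :=
    fun j => if j + 2 < n then {vtx 0, vtx 1, vtx (j+2)} else {vtx 0, vtx 2, vtx 3}
    with htri
  have htri_mem : ∀ j ∈ Finset.range h, tri j ∈ G.cliqueSet 3 := by
    intro j hj
    rw [Finset.mem_range] at hj
    rw [SimpleGraph.mem_cliqueSet_iff, htri]
    by_cases hjn : j + 2 < n
    · simp only [if_pos hjn]
      rw [SimpleGraph.is3Clique_triple_iff]
      exact ⟨hadj0 (vtx 1) (vne 1 0 (by omega) hn0 (by omega)),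
        hadj0 (vtx (j+2)) (vne (j+2) 0 hjn hn0 (by omega)),
        hadj1 j hj hjn⟩
    · simp only [if_neg hjn]
      rw [SimpleGraph.is3Clique_triple_iff]
      have hh1 : h = n - 1 := by omega
      exact ⟨hadj0 (vtx 2) (vne 2 0 (by omega) hn0 (by omega)),
        hadj0 (vtx 3) (vne 3 0 (by omega) hn0 (by omega)),
        hadj23 hh1⟩
  have htri_inj : Set.InjOn tri ↑(Finset.range h) := by
    intro j hj j' hj' heq
    rw [Finset.coe_range, Set.mem_Iio] at hj hj'
    rw [htri] at heq
    by_cases h1 : j + 2 < n <;> by_cases h2 : j' + 2 < n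
    · simp only [if_pos h1, if_pos h2] at heq
      have hm : vtx (j+2) ∈ ({vtx 0, vtx 1, vtx (j'+2)} : Finset (Fin n)) := by
        rw [← heq]; simp
      simp only [Finset.mem_insert, Finset.mem_singleton] at hm
      rcases hm with e | e | e
      · exact absurd e (vne (j+2) 0 h1 hn0 (by omega))
      · exact absurd e (vne (j+2) 1 h1 (by omega) (by omega))
      · have := congrArg Fin.val e
        rw [vval _ h1, vval _ h2] at this
        omega
    · simp only [if_pos h1, if_neg h2] at heq
      have hm : vtx 1 ∈ ({vtx 0, vtx 2, vtx 3} : Finset (Fin n)) := by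
        rw [← heq]; simp
      simp only [Finset.mem_insert, Finset.mem_singleton] at hm
      rcases hm with e | e | e
      · exact absurd e (vne 1 0 (by omega) hn0 (by omega))
      · exact absurd e (vne 1 2 (by omega) (by omega) (by omega))
      · exact absurd e (vne 1 3 (by omega) (by omega) (by omega))
    · simp only [if_neg h1, if_pos h2] at heq
      have hm : vtx 1 ∈ ({vtx 0, vtx 2, vtx 3} : Finset (Fin n)) := by
        rw [heq]; simp
      simp only [Finset.mem_insert, Finset.mem_singleton] at hm
      rcases hm with e | e | e
      · exact absurd e (vne 1 0 (by omega) hn0 (by omega))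
      · exact absurd e (vne 1 2 (by omega) (by omega) (by omega))
      · exact absurd e (vne 1 3 (by omega) (by omega) (by omega))
    · omega
  have hT : h ≤ triCount G := by
    have hcard : ((Finset.range h).image tri).card = h := by
      rw [Finset.card_image_of_injOn htri_inj, Finset.card_range]
    have hsub : (↑((Finset.range h).image tri) : Set (Finset (Fin n))) ⊆ G.cliqueSet 3 := by
      intro t ht
      rw [Finset.mem_coe, Finset.mem_image] at ht
      obtain ⟨j, hj, rfl⟩ := ht
      exact htri_mem j hj
    have := Set.ncard_le_ncard hsub (Set.toFinite _)
    rw [Set.ncard_coe_finset, hcard] at this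
    exact this
  refine ⟨G, hconn, ?_⟩
  unfold Hobj
  apply min_le_min
  · apply mul_le_mul_of_nonneg_left _ hα0
    unfold nonEdgeCount
    have hE : (edgeCount G : ℝ) ≤ ((n : ℝ) - 1) + h := by
      have : ((edgeCount G : ℕ) : ℝ) ≤ (((n - 1) + h : ℕ) : ℝ) := by exact_mod_cast hedge
      have hc : (((n - 1) + h : ℕ) : ℝ) = ((n : ℝ) - 1) + h := by
        push_cast [Nat.cast_sub (by omega : 1 ≤ n)]
        ring
      linarith [hc ▸ this]
    nlinarith [hE]
  · exact mul_le_mul_of_nonneg_left (by exact_mod_cast hT) (by linarith)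
end

section
/- Let G be a simple graph on the vertex set {1,…,n} with n ≥ 1, and let h be a vertex. Suppose there exists a function f assigning a nonnegative real number f(i,j) to every ordered pair of vertices (i,j), such that: f(i,j) = 0 whenever i and j are not adjacent in G; the net outflow at h satisfies Σ_j f(h,j) − Σ_j f(j,h) = n − 1; and for every vertex k ≠ h, Σ_j f(k,j) − Σ_j f(j,k) = −1. Then G is connected. -/
open SimpleGraph Finset

theorem stmt6 {n : ℕ} (hn : 1 ≤ n) (G : SimpleGraph (Fin n)) (h : Fin n)
    (f : Fin n → Fin n → ℝ)
    (hnonneg : ∀ i j, 0 ≤ f i j)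
    (hsupp : ∀ i j, ¬ G.Adj i j → f i j = 0)
    (hout : ∑ j, f h j - ∑ j, f j h = (n : ℝ) - 1)
    (hbal : ∀ k, k ≠ h → ∑ j, f k j - ∑ j, f j k = -1) :
    G.Connected := by
  classical
  rw [SimpleGraph.connected_iff]
  refine ⟨?_, ⟨h⟩⟩
  suffices hreach : ∀ w, G.Reachable h w by
    intro u v; exact (hreach u).symm.trans (hreach v)
  by_contra hc
  push_neg at hc
  obtain ⟨w, hw⟩ := hc
  set T : Finset (Fin n) := Finset.univ.filter (fun k => ¬ G.Reachable h k) with hT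
  have hwT : w ∈ T := by simp [hT, hw]
  have hhT : h ∉ T := by simp [hT]
  have hcross : ∀ k ∈ T, ∀ j ∉ T, f k j = 0 ∧ f j k = 0 := by
    intro k hk j hj
    simp only [hT, Finset.mem_filter, Finset.mem_univ, true_and, not_not] at hk hj
    constructor
    · exact hsupp _ _ (fun hA => hk (hj.trans ⟨hA.symm.toWalk⟩))
    · exact hsupp _ _ (fun hA => hk (hj.trans ⟨hA.toWalk⟩))
  have hsum : ∑ k ∈ T, (∑ j, f k j - ∑ j, f j k) = -(T.card : ℝ) := by
    rw [Finset.sum_congr rfl (fun k hk => hbal k (by rintro rfl; exact hhT hk))]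
    simp
  have hzero : ∑ k ∈ T, (∑ j, f k j - ∑ j, f j k) = 0 := by
    have h1 : ∀ k ∈ T, ∑ j, f k j = ∑ j ∈ T, f k j :=
      fun k hk => (Finset.sum_subset T.subset_univ
        (fun j _ hj => (hcross k hk j hj).1)).symm
    have h2 : ∀ k ∈ T, ∑ j, f j k = ∑ j ∈ T, f j k :=
      fun k hk => (Finset.sum_subset T.subset_univ
        (fun j _ hj => (hcross k hk j hj).2)).symm
    calc ∑ k ∈ T, (∑ j, f k j - ∑ j, f j k)
        = ∑ k ∈ T, (∑ j ∈ T, f k j - ∑ j ∈ T, f j k) :=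
          Finset.sum_congr rfl (fun k hk => by rw [h1 k hk, h2 k hk])
      _ = ∑ k ∈ T, ∑ j ∈ T, f k j - ∑ k ∈ T, ∑ j ∈ T, f j k := by
          rw [Finset.sum_sub_distrib]
      _ = 0 := by rw [Finset.sum_comm]; ring
  rw [hzero] at hsum
  have : T.card = 0 := by exact_mod_cast (neg_eq_zero.mp hsum.symm)
  exact absurd hwT (by simp [Finset.card_eq_zero.mp this])
end

section
/- Let G be a connected simple graph on the vertex set {1,…,n} with n ≥ 1, and let h be any vertex. Then there exists a function f assigning a nonnegative real number f(i,j) to every ordered pair of vertices (i,j), such that: f(i,j) = 0 whenever i and j are not adjacent in G; f(i,j) + f(j,i) ≤ n for every pair of adjacent vertices i, j; the net outflow at h satisfies Σ_j f(h,j) − Σ_j f(j,h) = n − 1; and for every vertex k ≠ h, Σ_j f(k,j) − Σ_j f(j,k) = −1. Together with the converse, the existence of such a flow is a necessary and sufficient condition for G to be connected. -/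
/-!
Send one unit of flow from `h` to every vertex `k` along a path `P k` from `h` to `k`
(`P h` is the trivial path), and let `f i j` count the paths traversing `i → j`. Every path is a
source-to-sink unit flow, so the net outflow is `n - 1` at `h` and `-1` elsewhere; a path uses
each edge at most once and in one direction, so `f i j + f j i ≤ n`.
-/

open SimpleGraph Finset

theorem List.sum_count_prodMk_eq_count_map_fst {α β : Type*} [DecidableEq α] [DecidableEq β]
    [Fintype β] (l : List (α × β)) (a : α) :
    ∑ b, l.count (a, b) = (l.map Prod.fst).count a := by
  induction l with
  | nil => simp
  | cons x l ih =>
    obtain ⟨x₁, x₂⟩ := x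
    simp only [List.count_cons, List.map_cons, sum_add_distrib, ih]
    by_cases hx : x₁ = a <;> simp [hx, Prod.ext_iff]

theorem List.sum_count_prodMk_eq_count_map_snd {α β : Type*} [DecidableEq α] [DecidableEq β]
    [Fintype α] (l : List (α × β)) (b : β) :
    ∑ a, l.count (a, b) = (l.map Prod.snd).count b := by
  induction l with
  | nil => simp
  | cons x l ih =>
    obtain ⟨x₁, x₂⟩ := x
    simp only [List.count_cons, List.map_cons, sum_add_distrib, ih]
    by_cases hx : x₂ = b <;> simp [hx, Prod.ext_iff]

theorem List.count_map_sym2Mk {α : Type*} [DecidableEq α] (l : List (α × α)) {a b : α}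
    (hab : a ≠ b) :
    (l.map fun x => s(x.1, x.2)).count s(a, b) = l.count (a, b) + l.count (b, a) := by
  induction l with
  | nil => simp
  | cons x l ih =>
    simp only [List.count_cons, List.map_cons, ih, beq_iff_eq, Sym2.eq_iff, Prod.ext_iff]
    grind

namespace SimpleGraph.Walk

variable {V : Type*} [DecidableEq V] {G : SimpleGraph V}

def dartCount {u v : V} (p : G.Walk u v) (i j : V) : ℕ :=
  (p.darts.map Dart.toProd).count (i, j)

theorem dartCount_eq_zero_of_not_adj {u v : V} (p : G.Walk u v) {i j : V} (hij : ¬G.Adj i j) :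
    p.dartCount i j = 0 := by
  rw [dartCount, List.count_eq_zero]
  rintro hmem
  obtain ⟨d, -, hd⟩ := List.mem_map.1 hmem
  exact hij (by simpa [hd] using d.adj)

theorem dartCount_add_dartCount_swap {u v : V} (p : G.Walk u v) {i j : V} (hij : i ≠ j) :
    p.dartCount i j + p.dartCount j i = p.edges.count s(i, j) := by
  rw [dartCount, dartCount, ← List.count_map_sym2Mk _ hij, edges, List.map_map]
  rfl

theorem IsPath.dartCount_add_dartCount_swap_le_one {u v : V} {p : G.Walk u v} (hp : p.IsPath)
    {i j : V} (hij : i ≠ j) : p.dartCount i j + p.dartCount j i ≤ 1 := by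
  rw [dartCount_add_dartCount_swap p hij]
  exact List.nodup_iff_count_le_one.1 hp.edges_nodup _

variable [Fintype V]

theorem sum_dartCount_left {u v : V} (p : G.Walk u v) (i : V) :
    ∑ j, p.dartCount i j = (p.darts.map (·.fst)).count i := by
  simp only [dartCount, List.sum_count_prodMk_eq_count_map_fst, List.map_map]
  rfl

theorem sum_dartCount_right {u v : V} (p : G.Walk u v) (j : V) :
    ∑ i, p.dartCount i j = (p.darts.map (·.snd)).count j := by
  simp only [dartCount, List.sum_count_prodMk_eq_count_map_snd, List.map_map]
  rfl

/-- Flow conservation for a walk from `u` to `v`, stated without subtraction. -/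
theorem sum_dartCount_add_ite {u v : V} (p : G.Walk u v) (w : V) :
    ∑ j, p.dartCount w j + (if w = v then 1 else 0) =
      ∑ j, p.dartCount j w + (if w = u then 1 else 0) := by
  have hfst := congrArg (List.count w) (map_fst_darts_append p)
  have hsnd := congrArg (List.count w) (cons_map_snd_darts p)
  rw [List.count_append, List.count_singleton] at hfst
  rw [List.count_cons] at hsnd
  rw [sum_dartCount_left, sum_dartCount_right]
  simp only [beq_iff_eq] at hfst hsnd
  grind

end SimpleGraph.Walk

namespace SimpleGraph

variable {V : Type*} [Fintype V] [DecidableEq V] {G : SimpleGraph V} {u : V}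

def sumDartCount (p : ∀ k, G.Walk u k) (i j : V) : ℕ :=
  ∑ k, (p k).dartCount i j

theorem sumDartCount_eq_zero_of_not_adj (p : ∀ k, G.Walk u k) {i j : V} (hij : ¬G.Adj i j) :
    sumDartCount p i j = 0 :=
  sum_eq_zero fun k _ => (p k).dartCount_eq_zero_of_not_adj hij

theorem sumDartCount_add_sumDartCount_swap_le {p : ∀ k, G.Walk u k} (hp : ∀ k, (p k).IsPath)
    {i j : V} (hij : i ≠ j) : sumDartCount p i j + sumDartCount p j i ≤ Fintype.card V := by
  rw [sumDartCount, sumDartCount, ← sum_add_distrib, ← card_univ, card_eq_sum_ones]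
  exact sum_le_sum fun k _ => (hp k).dartCount_add_dartCount_swap_le_one hij

theorem sum_sumDartCount_add_one (p : ∀ k, G.Walk u k) (w : V) :
    ∑ j, sumDartCount p w j + 1 =
      ∑ j, sumDartCount p j w + if w = u then Fintype.card V else 0 := by
  have := sum_congr rfl fun k (_ : k ∈ univ) => (p k).sum_dartCount_add_ite w
  simp only [sum_add_distrib, sum_ite_eq, mem_univ, if_true, sum_const, card_univ] at this
  simp only [sumDartCount]
  rw [sum_comm, this, sum_comm]
  split_ifs <;> simp

end SimpleGraph

theorem stmt7_general {n : ℕ} (G : SimpleGraph (Fin n)) (hG : G.Connected)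
    (h : Fin n) :
    ∃ f : Fin n → Fin n → ℝ,
      (∀ i j, 0 ≤ f i j) ∧
      (∀ i j, ¬ G.Adj i j → f i j = 0) ∧
      (∀ i j, G.Adj i j → f i j + f j i ≤ (n : ℝ)) ∧
      (∑ j, f h j - ∑ j, f j h = (n : ℝ) - 1) ∧
      (∀ k, k ≠ h → ∑ j, f k j - ∑ j, f j k = -1) := by
  let P k : G.Path h k := (hG.preconnected h k).some.toPath
  have hflow (w : Fin n) := sum_sumDartCount_add_one (fun k => (P k).1) w
  refine ⟨fun i j => sumDartCount (fun k => (P k).1) i j, fun _ _ => Nat.cast_nonneg _,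
    fun i j hij => by simp [sumDartCount_eq_zero_of_not_adj _ hij], fun i j hij => ?_, ?_,
    fun k hk => ?_⟩
  · have hcap := sumDartCount_add_sumDartCount_swap_le (fun k => (P k).2) hij.ne
    rw [Fintype.card_fin] at hcap
    dsimp only
    exact_mod_cast hcap
  · have hh := congrArg (Nat.cast : ℕ → ℝ) (hflow h)
    push_cast [if_pos rfl, Fintype.card_fin] at hh
    linarith
  · have hk' := congrArg (Nat.cast : ℕ → ℝ) (hflow k)
    push_cast [if_neg hk] at hk'
    linarith

theorem stmt7 {n : ℕ} (hn : 1 ≤ n) (G : SimpleGraph (Fin n)) (hG : G.Connected)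
    (h : Fin n) :
    ∃ f : Fin n → Fin n → ℝ,
      (∀ i j, 0 ≤ f i j) ∧
      (∀ i j, ¬ G.Adj i j → f i j = 0) ∧
      (∀ i j, G.Adj i j → f i j + f j i ≤ (n : ℝ)) ∧
      (∑ j, f h j - ∑ j, f j h = (n : ℝ) - 1) ∧
      (∀ k, k ≠ h → ∑ j, f k j - ∑ j, f j k = -1) :=
  stmt7_general G hG h
end

section
/- Let G be a connected simple graph on the vertex set {1,…,n} with n ≥ 1, let h be a vertex, and let f be any nonnegative real-valued function on ordered pairs of vertices such that f(i,j) = 0 whenever i and j are not adjacent in G, Σ_j f(h,j) − Σ_j f(j,h) = n − 1, and Σ_j f(k,j) − Σ_j f(j,k) = −1 for every vertex k ≠ h. Then the total flow satisfies Σ_{i,j} f(i,j) ≥ Σ_{k} dist_G(h,k), where dist_G(h,k) is the length of a shortest path between h and k in G and the sum ranges over all vertices k. -/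
open SimpleGraph Finset

theorem stmt8 {n : ℕ} (hn : 1 ≤ n) (G : SimpleGraph (Fin n)) (hG : G.Connected)
    (h : Fin n) (f : Fin n → Fin n → ℝ)
    (hnonneg : ∀ i j, 0 ≤ f i j)
    (hsupp : ∀ i j, ¬ G.Adj i j → f i j = 0)
    (hout : ∑ j, f h j - ∑ j, f j h = (n : ℝ) - 1)
    (hbal : ∀ k, k ≠ h → ∑ j, f k j - ∑ j, f j k = -1) :
    ∑ k, (G.dist h k : ℝ) ≤ ∑ i, ∑ j, f i j := by
  have hadj : ∀ i j : Fin n, f i j * ((G.dist h j : ℝ) - (G.dist h i : ℝ)) ≤ f i j := by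
    intro i j
    by_cases hij : G.Adj i j
    · have h1 : G.dist h j ≤ G.dist h i + 1 := by
        have htri := hG.dist_triangle (u := h) (v := i) (w := j)
        have : G.dist i j = 1 := (G.dist_eq_one_iff_adj).2 hij
        omega
      have h2 : (G.dist h j : ℝ) - (G.dist h i : ℝ) ≤ 1 := by
        have := (Nat.cast_le (α := ℝ)).2 h1
        push_cast at this; linarith
      nlinarith [hnonneg i j]
    · simp [hsupp i j hij]
  have key : ∑ k, (G.dist h k : ℝ) = ∑ i, ∑ j, f i j * ((G.dist h j : ℝ) - (G.dist h i : ℝ)) := by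
    have expand : ∑ i, ∑ j, f i j * ((G.dist h j : ℝ) - (G.dist h i : ℝ))
        = ∑ k : Fin n, ((∑ i, f i k) - (∑ j, f k j)) * (G.dist h k : ℝ) := by
      simp only [mul_sub, Finset.sum_sub_distrib, sub_mul, Finset.sum_mul]
      congr 1
      rw [Finset.sum_comm]
    rw [expand]
    apply Finset.sum_congr rfl
    intro k _
    by_cases hk : k = h
    · subst hk
      simp [SimpleGraph.dist_self]
    · have := hbal k hk
      have : (∑ i, f i k) - (∑ j, f k j) = 1 := by linarith
      rw [this, one_mul]
  rw [key]
  exact Finset.sum_le_sum fun i _ => Finset.sum_le_sum fun j _ => hadj i j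
end

section
/- Let n and k be integers with 2 ≤ k ≤ n. Every simple graph on n vertices with exactly k(k−1)/2 edges has at most k(k−1)(k−2)/6 triangles, and this bound is attained: the graph consisting of a complete graph on k of the n vertices together with n−k isolated vertices has exactly k(k−1)/2 edges and exactly k(k−1)(k−2)/6 triangles. Hence, for d = k(k−1)/2, the maximum number of triangles among graphs on n vertices with d edges is achieved by a fully connected subgraph together with disconnected nodes. -/
/-!
The triangles of `G` form a family of 3-sets whose shadow consists of edges of `G`. If there
were more than `C(k, 3)` of them, the Kruskal–Katona theorem would compare them with the initial
segment of the colex order with `C(k, 3) + 1` members: the 3-subsets of `{0, …, k - 1}` together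
with `{0, 1, k}`. That segment's shadow contains every 2-subset of `{0, …, k - 1}` and `{1, k}`,
so `G` would have more than `C(k, 2)` edges. The clique on `{0, …, k - 1}` attains the bound.
-/

open SimpleGraph

open Finset
open scoped FinsetFamily

lemma Nat.choose_three_right (n : ℕ) : n.choose 3 = n * (n - 1) * (n - 2) / 6 := by
  rw [Nat.choose_eq_descFactorial_div_factorial]
  simp [Nat.descFactorial, Nat.factorial, mul_comm]

namespace Finset.Colex

variable {α : Type*} [LinearOrder α] [Fintype α] [LocallyFiniteOrderBot α]
  {s : Finset α} {a b : α}

lemma powersetCard_Iio_subset_initSeg (ha : a ∈ s) : powersetCard #s (Iio a) ⊆ initSeg s := by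
  intro t ht
  rw [mem_powersetCard] at ht
  have hat : a ∉ t := fun h => (mem_Iio.1 (ht.1 h)).false
  refine mem_initSeg.2 ⟨ht.2.symm, le_of_lt ?_⟩
  exact toColex_lt_toColex_iff_exists_forall_lt.2 ⟨a, ha, hat, fun c hc _ => mem_Iio.1 (ht.1 hc)⟩

lemma choose_card_Iio_lt_card_initSeg (ha : a ∈ s) : (#(Iio a)).choose #s < #(initSeg s) := by
  have hs : s ∉ powersetCard #s (Iio a) := fun h =>
    (mem_Iio.1 ((mem_powersetCard.1 h).1 ha)).false
  calc (#(Iio a)).choose #s = #(powersetCard #s (Iio a)) := (card_powersetCard _ _).symm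
    _ < #(insert s (powersetCard #s (Iio a))) := by rw [card_insert_of_notMem hs]; omega
    _ ≤ #(initSeg s) := card_le_card <| insert_subset
        (mem_initSeg.2 ⟨rfl, le_rfl⟩) (powersetCard_Iio_subset_initSeg ha)

lemma initSeg_insert_Iio_subset (hba : b ≤ a) :
    initSeg (insert a (Iio b)) ⊆
      insert (insert a (Iio b)) (powersetCard (#(Iio b) + 1) (Iio a)) := by
  set s := insert a (Iio b)
  have has : a ∉ Iio b := by simpa using hba
  have hs : #s = #(Iio b) + 1 := card_insert_of_notMem has
  intro t ht
  obtain ⟨hts, hle⟩ := mem_initSeg.1 ht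
  have hta : ∀ c ∈ t, c ≤ a := forall_le_mono hle <| by
    simpa [s] using fun c hc => hc.le.trans hba
  by_cases hat : a ∈ t
  · refine mem_insert.2 (Or.inl ?_)
    have herase : toColex (t.erase a) ≤ toColex (Iio b) := by
      have := (toColex_sdiff_le_toColex_sdiff (u := {a}) (by simpa) (by simp [s])).2 hle
      rwa [sdiff_singleton_eq_erase, sdiff_singleton_eq_erase, erase_insert has] at this
    have hsub : t.erase a ⊆ Iio b := fun c hc => mem_Iio.2 <|
      forall_lt_mono herase (fun d hd => mem_Iio.1 hd) c hc
    have := eq_of_subset_of_card_le hsub (by rw [card_erase_of_mem hat]; omega)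
    rw [← insert_erase hat, this]
  · refine mem_insert_of_mem (mem_powersetCard.2 ⟨fun c hc => mem_Iio.2 ?_, by omega⟩)
    exact (hta c hc).lt_of_ne fun h => hat (h ▸ hc)

end Finset.Colex

namespace Finset

theorem choose_pred_lt_card_shadow {n r k : ℕ} {𝒜 : Finset (Finset (Fin n))}
    (h𝒜 : (𝒜 : Set (Finset (Fin n))).Sized r) (hr : 2 ≤ r) (hrk : r ≤ k + 1)
    (hk : k.choose r < #𝒜) : k.choose (r - 1) < #(∂ 𝒜) := by
  have hkn : k < n := by
    by_contra! hnk
    have := h𝒜.card_le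
    rw [Fintype.card_fin] at this
    have := Nat.choose_le_choose r hnk
    omega
  set a : Fin n := ⟨k, hkn⟩
  set b : Fin n := ⟨r - 1, by omega⟩
  have hba : b ≤ a := Fin.mk_le_mk.2 (by omega)
  have hIa : #(Iio a) = k := Fin.card_Iio a
  have hIb : #(Iio b) = r - 1 := Fin.card_Iio b
  -- `{0, …, r - 2, k}` is the `(k.choose r + 1)`-th `r`-set in colex.
  set s := insert a (Iio b)
  have hs : #s = r := by
    rw [card_insert_of_notMem (by simpa using hba)]; omega
  have hsize : #(Colex.initSeg s) ≤ #𝒜 := calc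
    #(Colex.initSeg s) ≤ #(insert s (powersetCard (#(Iio b) + 1) (Iio a))) :=
        card_le_card (Colex.initSeg_insert_Iio_subset hba)
    _ ≤ k.choose r + 1 := by
        grw [card_insert_le, card_powersetCard, hIa, hIb, Nat.sub_add_cancel (by omega)]
    _ ≤ #𝒜 := hk
  have hsne : s.Nonempty := insert_nonempty _ _
  have ha : a ∈ s.erase (s.min' hsne) := by
    refine mem_erase.2 ⟨ne_of_gt ?_, mem_insert_self _ _⟩
    calc s.min' hsne ≤ ⟨0, by omega⟩ := min'_le _ _ (by simp [s, b]; omega)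
      _ < a := Fin.mk_lt_mk.2 (by omega)
  calc k.choose (r - 1) = (#(Iio a)).choose #(s.erase (s.min' hsne)) := by
        rw [hIa, card_erase_of_mem (min'_mem _ _), hs]
    _ < #(Colex.initSeg (s.erase (s.min' hsne))) := Colex.choose_card_Iio_lt_card_initSeg ha
    _ = #(∂ (Colex.initSeg s)) := by rw [Colex.shadow_initSeg hsne]
    _ ≤ #(∂ 𝒜) := kruskal_katona h𝒜 hsize (hs ▸ Colex.isInitSeg_initSeg)

end Finset

namespace SimpleGraph

variable {V : Type*}

@[simps]
def completeOn (s : Set V) : SimpleGraph V where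
  Adj u v := u ≠ v ∧ u ∈ s ∧ v ∈ s

lemma isClique_completeOn_iff {s t : Set V} (ht : t.Nontrivial) :
    (completeOn s).IsClique t ↔ t ⊆ s := by
  refine ⟨fun h v hv => ?_, fun h u hu v hv huv => ⟨huv, h hu, h hv⟩⟩
  obtain ⟨w, hw, hwv⟩ := ht.exists_ne v
  exact (h hv hw hwv.symm).2.1

section Finite

variable [Fintype V] [DecidableEq V]

lemma shadow_cliqueFinset_subset (G : SimpleGraph V) [DecidableRel G.Adj] (r : ℕ) :
    ∂ (G.cliqueFinset (r + 1)) ⊆ G.cliqueFinset r := by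
  intro t ht
  obtain ⟨u, hu, a, hau, rfl⟩ := mem_shadow_iff.1 ht
  exact mem_cliqueFinset_iff.2 ((mem_cliqueFinset_iff.1 hu).erase_of_mem hau)

lemma card_cliqueFinset_two (G : SimpleGraph V) [DecidableRel G.Adj] :
    #(G.cliqueFinset 2) = #G.edgeFinset := by
  refine (card_nbij Sym2.toFinset (fun e he => ?_) (fun e _ e' _ he => ?_) (fun t ht => ?_)).symm
  · induction e with | _ x y
    have hxy : G.Adj x y := by simpa using he
    rw [Sym2.toFinset_mk_eq, mem_coe, mem_cliqueFinset_iff]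
    exact ⟨by rw [coe_pair, isClique_pair]; exact fun _ => hxy, card_pair hxy.ne⟩
  · exact Sym2.ext fun x => by rw [← Sym2.mem_toFinset, he, Sym2.mem_toFinset]
  · obtain ⟨hclique, htcard⟩ := mem_cliqueFinset_iff.1 ht
    obtain ⟨x, y, hxy, rfl⟩ := card_eq_two.1 htcard
    exact ⟨s(x, y), by simpa using hclique (by simp) (by simp) hxy, Sym2.toFinset_mk_eq⟩

lemma cliqueFinset_completeOn (s : Finset V) [DecidableRel (completeOn (s : Set V)).Adj] {r : ℕ}
    (hr : 2 ≤ r) : (completeOn (s : Set V)).cliqueFinset r = powersetCard r s := by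
  ext t
  rw [mem_cliqueFinset_iff, mem_powersetCard, isNClique_iff]
  refine and_congr_left fun htr => ?_
  rw [isClique_completeOn_iff (one_lt_card_iff_nontrivial.1 (by omega)), coe_subset]

end Finite

section kruskalKatona

variable {n : ℕ} (G : SimpleGraph (Fin n)) [DecidableRel G.Adj]

theorem card_cliqueFinset_succ_le {r k : ℕ} (hr : 1 ≤ r) (hrk : r ≤ k)
    (hG : #(G.cliqueFinset r) ≤ k.choose r) : #(G.cliqueFinset (r + 1)) ≤ k.choose (r + 1) := by
  by_contra! h
  have hshadow := choose_pred_lt_card_shadow (fun t ht => (mem_cliqueFinset_iff.1 ht).card_eq)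
    (by omega) (by omega) h
  have := card_le_card (G.shadow_cliqueFinset_subset r)
  rw [Nat.add_sub_cancel] at hshadow
  omega

theorem card_cliqueFinset_three_le {k : ℕ} (hk : 2 ≤ k) (hG : #G.edgeFinset ≤ k.choose 2) :
    #(G.cliqueFinset 3) ≤ k.choose 3 :=
  G.card_cliqueFinset_succ_le (r := 2) le_add_self hk (by rwa [card_cliqueFinset_two])

end kruskalKatona

end SimpleGraph

lemma triCount_eq_card_cliqueFinset {n : ℕ} (G : SimpleGraph (Fin n)) [DecidableRel G.Adj] :
    triCount G = #(G.cliqueFinset 3) := by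
  rw [triCount, ← coe_cliqueFinset, Set.ncard_coe_finset]

lemma edgeCount_eq_card_edgeFinset {n : ℕ} (G : SimpleGraph (Fin n)) [DecidableRel G.Adj] :
    edgeCount G = #G.edgeFinset := by
  rw [edgeCount, ← coe_edgeFinset, Set.ncard_coe_finset]

theorem stmt11 {n k : ℕ} (hk : 2 ≤ k) (hkn : k ≤ n) :
    (∀ G : SimpleGraph (Fin n), edgeCount G = k * (k - 1) / 2 →
      triCount G ≤ k * (k - 1) * (k - 2) / 6) ∧
    ∃ G : SimpleGraph (Fin n),
      (∀ u v : Fin n, G.Adj u v ↔ u ≠ v ∧ (u : ℕ) < k ∧ (v : ℕ) < k) ∧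
      edgeCount G = k * (k - 1) / 2 ∧
      triCount G = k * (k - 1) * (k - 2) / 6 := by
  classical
  rw [← Nat.choose_two_right, ← Nat.choose_three_right]
  set K : Finset (Fin n) := {v | (v : ℕ) < k}
  have hK : #K = k := by rw [Fin.card_filter_val_lt]; omega
  refine ⟨fun G hG => ?_, completeOn K, fun u v => by simp [K], ?_, ?_⟩
  · rw [triCount_eq_card_cliqueFinset]
    exact card_cliqueFinset_three_le G hk (by rw [← edgeCount_eq_card_edgeFinset, hG])
  · rw [edgeCount_eq_card_edgeFinset, ← card_cliqueFinset_two,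
      cliqueFinset_completeOn _ le_rfl, card_powersetCard, hK]
  · rw [triCount_eq_card_cliqueFinset, cliqueFinset_completeOn _ (by norm_num),
      card_powersetCard, hK]
end
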